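/- arXiv:2301.05595 — 2 statements merged into one kernel-verified Lean document; each statement's English description precedes it below -/
import Mathlib

section
/- The matrix exponential of a skew-symmetric matrix ω̃ equals the Rodrigues formula: exp(ω̃) = I + (sin‖ω‖/‖ω‖) ω̃ + ((1 - cos‖ω‖)/‖ω‖²) ω̃², for ω ≠ 0. -/
open Matrix Real

noncomputable def norm3 (ω : Fin 3 → ℝ) : ℝ := Real.sqrt (ω 0 ^ 2 + ω 1 ^ 2 + ω 2 ^ 2)

def skew (ω : Fin 3 → ℝ) : Matrix (Fin 3) (Fin 3) ℝ :=
  !![0, -ω 2, ω 1; ω 2, 0, -ω 0; -ω 1, ω 0, 0]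

/-!
If `X ^ 3 = -θ ^ 2 • X`, every odd power of `X` is a multiple of `X` and every even power beyond
the zeroth a multiple of `X ^ 2`, with coefficients `(-θ ^ 2) ^ k`. Splitting the exponential
series into even and odd terms therefore leaves, up to the factors `θ` and `θ ^ 2`, the power
series of `sin θ` and of `cos θ - 1`. The matrix `skew ω` satisfies this with `θ = norm3 ω`
(its characteristic polynomial is `t ^ 3 + norm3 ω ^ 2 * t`).
-/

open scoped Nat
open NormedSpace

section PowThree

variable {R 𝔸 : Type*} [CommSemiring R] [Semiring 𝔸] [Algebra R 𝔸] {X : 𝔸} {c : R}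

theorem pow_two_mul_add_one_of_pow_three_eq_smul (h : X ^ 3 = c • X) (k : ℕ) :
    X ^ (2 * k + 1) = c ^ k • X := by
  induction k with
  | zero => simp
  | succ k ih =>
    rw [show 2 * (k + 1) + 1 = 2 * k + 1 + 2 by ring, pow_add, ih, smul_mul_assoc, ← pow_succ', h,
      smul_smul, pow_succ]

theorem pow_two_mul_add_two_of_pow_three_eq_smul (h : X ^ 3 = c • X) (k : ℕ) :
    X ^ (2 * k + 2) = c ^ k • X ^ 2 := by
  rw [pow_succ, pow_two_mul_add_one_of_pow_three_eq_smul h, smul_mul_assoc, ← sq]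

end PowThree

section Rodrigues

variable {𝔸 : Type*} [Ring 𝔸] [Algebra ℝ 𝔸] [TopologicalSpace 𝔸] [ContinuousSMul ℝ 𝔸]
  {X : 𝔸} {θ : ℝ}

theorem hasSum_exp_series_odd_of_pow_three_eq (hθ : θ ≠ 0) (h : X ^ 3 = -θ ^ 2 • X) :
    HasSum (fun k ↦ ((2 * k + 1)! : ℝ)⁻¹ • X ^ (2 * k + 1)) ((sin θ / θ) • X) := by
  convert ((hasSum_sin θ).div_const θ).smul_const X using 2 with k
  rw [pow_two_mul_add_one_of_pow_three_eq_smul h, smul_smul]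
  congr 1
  field_simp
  ring

theorem hasSum_exp_series_even_of_pow_three_eq [IsTopologicalAddGroup 𝔸] (hθ : θ ≠ 0)
    (h : X ^ 3 = -θ ^ 2 • X) :
    HasSum (fun k ↦ ((2 * k)! : ℝ)⁻¹ • X ^ (2 * k)) (1 + ((1 - cos θ) / θ ^ 2) • X ^ 2) := by
  have hcos : HasSum (fun k ↦ (-1) ^ (k + 1) * θ ^ (2 * (k + 1)) / (2 * (k + 1))!) (cos θ - 1) := by
    simpa using (hasSum_nat_add_iff' 1).mpr (hasSum_cos θ)
  rw [← hasSum_nat_add_iff' 1]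
  simp only [Finset.range_one, Finset.sum_singleton, mul_zero, Nat.factorial_zero, Nat.cast_one,
    inv_one, pow_zero, one_smul, add_sub_cancel_left]
  have hterm (k : ℕ) : ((2 * (k + 1))! : ℝ)⁻¹ • X ^ (2 * (k + 1)) =
      ((-1) ^ (k + 1) * θ ^ (2 * (k + 1)) / (2 * (k + 1))! / -θ ^ 2) • X ^ 2 := by
    rw [mul_add, pow_two_mul_add_two_of_pow_three_eq_smul h, smul_smul]
    congr 1
    field_simp
    ring
  rw [funext hterm, show (1 - cos θ) / θ ^ 2 = (cos θ - 1) / -θ ^ 2 by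
    rw [div_neg, ← neg_div, neg_sub]]
  exact (hcos.div_const _).smul_const _

theorem exp_eq_of_pow_three_eq_neg_sq_smul [IsTopologicalRing 𝔸] [T2Space 𝔸] (hθ : θ ≠ 0)
    (h : X ^ 3 = -θ ^ 2 • X) :
    exp X = 1 + (sin θ / θ) • X + ((1 - cos θ) / θ ^ 2) • X ^ 2 := by
  rw [exp_eq_tsum ℝ, add_right_comm]
  exact (HasSum.even_add_odd (f := fun n ↦ (n ! : ℝ)⁻¹ • X ^ n)
    (hasSum_exp_series_even_of_pow_three_eq hθ h)
    (hasSum_exp_series_odd_of_pow_three_eq hθ h)).tsum_eq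

end Rodrigues

theorem skew_pow_three (ω : Fin 3 → ℝ) : skew ω ^ 3 = -norm3 ω ^ 2 • skew ω := by
  rw [norm3, sq_sqrt (by positivity)]
  ext i j
  fin_cases i <;> fin_cases j <;>
    simp [skew, pow_succ, Matrix.mul_apply, Fin.sum_univ_three] <;> ring

theorem norm3_ne_zero {ω : Fin 3 → ℝ} (hω : ω ≠ 0) : norm3 ω ≠ 0 := by
  contrapose! hω
  rw [norm3, sqrt_eq_zero (by positivity)] at hω
  have h0 : ω 0 = 0 := by nlinarith [sq_nonneg (ω 0), sq_nonneg (ω 1), sq_nonneg (ω 2)]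
  have h1 : ω 1 = 0 := by nlinarith [sq_nonneg (ω 0), sq_nonneg (ω 1), sq_nonneg (ω 2)]
  have h2 : ω 2 = 0 := by nlinarith [sq_nonneg (ω 0), sq_nonneg (ω 1), sq_nonneg (ω 2)]
  ext i
  fin_cases i <;> assumption

theorem rodrigues (ω : Fin 3 → ℝ) (hω : ω ≠ 0) :
    NormedSpace.exp (skew ω) =
      1 + (Real.sin (norm3 ω) / norm3 ω) • skew ω
        + ((1 - Real.cos (norm3 ω)) / norm3 ω ^ 2) • (skew ω ^ 2) :=
  exp_eq_of_pow_three_eq_neg_sq_smul (norm3_ne_zero hω) (skew_pow_three ω)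
end

section
/- For a smooth curve Z(t) of n×n matrices, the derivative of the matrix exponential satisfies (d/dt) exp(Z(t)) = exp(Z(t)) · dexp₋Z(t)(Ż(t)), where dexp_X(Y) = Σ_{i≥0} ad(X)^i(Y)/(i+1)!. -/
open Matrix

attribute [local instance] Matrix.linftyOpNormedAddCommGroup Matrix.linftyOpNormedRing Matrix.linftyOpNormedSpace Matrix.linftyOpNormedAlgebra

def adM {n : ℕ} (X Y : Matrix (Fin n) (Fin n) ℝ) : Matrix (Fin n) (Fin n) ℝ := X * Y - Y * X

noncomputable def dexp {n : ℕ} (X Y : Matrix (Fin n) (Fin n) ℝ) : Matrix (Fin n) (Fin n) ℝ :=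
  ∑' i : ℕ, (((i + 1).factorial : ℝ))⁻¹ • (adM X)^[i] Y

/-!
With `L` and `R` the operators of left and right multiplication by `x`, differentiating
`exp x = ∑ xᵏ/k!` termwise gives `∑ₖ (1/k!) ∑_{i<k} Lⁱ R^{k-1-i}`, the divided difference
of the exponential at the commuting pair `L, R` (formally `(exp R - exp L)/(R - L)`).
Writing `R = L + D`, a binomial identity in each degree turns it into `exp L · ∑ D^q/(q+1)!`;
here `exp L` is left multiplication by `exp x` and `D = R - L = ad(-x)`.
-/

open Finset NormedSpace ContinuousLinearMap
open scoped Nat RightActions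

theorem Commute.sum_antidiagonal_pow_mul_add_pow {R : Type*} [Ring R] {a d : R} (h : Commute a d)
    (N : ℕ) :
    ∑ ij ∈ antidiagonal N, a ^ ij.1 * (a + d) ^ ij.2 =
      ∑ ij ∈ antidiagonal N, (N + 1).choose (ij.2 + 1) • (a ^ ij.1 * d ^ ij.2) := by
  -- both sides satisfy `S (N + 1) = (a + d) ^ (N + 1) + a * S N`
  induction N with
  | zero => simp
  | succ N ih =>
    have binom : (a + d) ^ (N + 1) =
        d ^ (N + 1) + ∑ ij ∈ antidiagonal N, (N + 1).choose ij.2 • (a ^ (ij.1 + 1) * d ^ ij.2) := by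
      rw [add_comm, h.symm.add_pow', Nat.sum_antidiagonal_succ', ← Nat.sum_antidiagonal_swap]
      simp [(h.pow_pow _ _).eq]
    have shift : ∑ ij ∈ antidiagonal N, a ^ (ij.1 + 1) * (a + d) ^ ij.2 =
        ∑ ij ∈ antidiagonal N, (N + 1).choose (ij.2 + 1) • (a ^ (ij.1 + 1) * d ^ ij.2) := by
      simp_rw [pow_succ' a, mul_assoc, ← mul_sum, ih, mul_sum, mul_smul_comm]
    rw [Nat.sum_antidiagonal_succ, Nat.sum_antidiagonal_succ, shift, binom]
    simp only [Nat.choose_succ_succ' (N + 1), add_smul, sum_add_distrib, pow_zero, one_mul,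
      Nat.choose_self, one_smul, Nat.choose_succ_self, add_zero]
    abel

theorem Commute.sum_antidiagonal_inv_factorial_smul_pow_mul_pow {𝕜 R : Type*} [Field 𝕜]
    [CharZero 𝕜] [Ring R] [Algebra 𝕜 R] {a d : R} (h : Commute a d) (N : ℕ) :
    ∑ ij ∈ antidiagonal N, ((ij.1 ! : 𝕜)⁻¹ * ((ij.2 + 1)! : 𝕜)⁻¹) • (a ^ ij.1 * d ^ ij.2) =
      ((N + 1)! : 𝕜)⁻¹ • ∑ ij ∈ antidiagonal N, a ^ ij.1 * (a + d) ^ ij.2 := by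
  rw [h.sum_antidiagonal_pow_mul_add_pow, smul_sum]
  refine sum_congr rfl fun ij hij => ?_
  obtain rfl : ij.1 + ij.2 = N := mem_antidiagonal.mp hij
  have key := Nat.add_choose_mul_factorial_mul_factorial ij.1 (ij.2 + 1)
  have hC : ((ij.1 + (ij.2 + 1)).choose (ij.2 + 1) : 𝕜) ≠ 0 :=
    Nat.cast_ne_zero.mpr (Nat.choose_pos (Nat.le_add_left _ _)).ne'
  rw [← add_assoc] at key hC
  rw [← Nat.cast_smul_eq_nsmul 𝕜, smul_smul, ← key]
  push_cast
  field_simp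

section DividedDifference

variable {𝕂 𝔅 : Type*} [RCLike 𝕂] [NormedRing 𝔅] [NormedAlgebra 𝕂 𝔅]

theorem summable_norm_inv_factorial_succ_smul_pow (x : 𝔅) :
    Summable fun q : ℕ => ‖((q + 1)! : 𝕂)⁻¹ • x ^ q‖ := by
  refine (norm_expSeries_summable' (𝕂 := 𝕂) x).of_nonneg_of_le (fun _ => norm_nonneg _) fun q => ?_
  rw [norm_smul, norm_smul, norm_inv, norm_inv, RCLike.norm_natCast, RCLike.norm_natCast]
  gcongr
  exact q.le_succ

theorem Commute.tsum_inv_factorial_smul_geom_sum₂_eq_exp_mul [CompleteSpace 𝔅] {a b : 𝔅}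
    (h : Commute a b) :
    ∑' k : ℕ, (k ! : 𝕂)⁻¹ • ∑ i ∈ range k, a ^ i * b ^ (k - 1 - i) =
      NormedSpace.exp a * ∑' q : ℕ, ((q + 1)! : 𝕂)⁻¹ • (b - a) ^ q := by
  have hd : Commute a (b - a) := h.sub_right (.refl a)
  rw [NormedSpace.exp_eq_tsum 𝕂, tsum_mul_tsum_eq_tsum_sum_antidiagonal_of_summable_norm
    (norm_expSeries_summable' a) (summable_norm_inv_factorial_succ_smul_pow _),
    ← Nat.succ_injective.tsum_eq]
  · refine tsum_congr fun N => ?_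
    simp_rw [smul_mul_smul_comm, hd.sum_antidiagonal_inv_factorial_smul_pow_mul_pow, add_sub_cancel,
      Nat.sum_antidiagonal_eq_sum_range_succ (fun i j => a ^ i * b ^ j), Nat.succ_sub_one]
  · rintro (_ | N) hN
    · simp at hN
    · exact ⟨N, rfl⟩

end DividedDifference

section OperatorNorm

variable {𝕜 E : Type*} [NontriviallyNormedField 𝕜] [SeminormedAddCommGroup E] [NormedSpace 𝕜 E]

theorem ContinuousLinearMap.opNorm_pow_le (f : E →L[𝕜] E) (n : ℕ) : ‖f ^ n‖ ≤ ‖f‖ ^ n := by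
  induction n with
  | zero => exact norm_id_le
  | succ n ih =>
    rw [pow_succ, pow_succ]
    exact (norm_mul_le _ _).trans (by gcongr)

theorem ContinuousLinearMap.norm_geom_sum₂_le {a b : E →L[𝕜] E} {r : ℝ} (ha : ‖a‖ ≤ r)
    (hb : ‖b‖ ≤ r) (k : ℕ) : ‖∑ i ∈ range k, a ^ i * b ^ (k - 1 - i)‖ ≤ k * r ^ (k - 1) := by
  have hr : 0 ≤ r := (norm_nonneg a).trans ha
  calc ‖∑ i ∈ range k, a ^ i * b ^ (k - 1 - i)‖ ≤ ∑ i ∈ range k, r ^ (k - 1) := by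
        refine norm_sum_le_of_le _ fun i hi => ?_
        have hik : i + (k - 1 - i) = k - 1 := by have := mem_range.mp hi; omega
        calc ‖a ^ i * b ^ (k - 1 - i)‖ ≤ ‖a‖ ^ i * ‖b‖ ^ (k - 1 - i) :=
              (norm_mul_le _ _).trans (by gcongr <;> exact opNorm_pow_le _ _)
          _ ≤ r ^ i * r ^ (k - 1 - i) := by gcongr
          _ = r ^ (k - 1) := by rw [← pow_add, hik]
    _ = k * r ^ (k - 1) := by simp

end OperatorNorm

section Derivative

variable {𝕂 𝔸 : Type*} [RCLike 𝕂] [NormedRing 𝔸] [NormedAlgebra 𝕂 𝔸]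

namespace ContinuousLinearMap

@[simp]
theorem mul_iterate_apply (x y : 𝔸) (n : ℕ) : (mul 𝕂 𝔸 x)^[n] y = x ^ n * y :=
  congrFun (mul_left_iterate x n) y

@[simp]
theorem flip_mul_iterate_apply (x y : 𝔸) (n : ℕ) : ((mul 𝕂 𝔸).flip x)^[n] y = y * x ^ n :=
  congrFun (mul_right_iterate x n) y

theorem commute_mul_flip_mul (x : 𝔸) : Commute (mul 𝕂 𝔸 x) ((mul 𝕂 𝔸).flip x) := by
  ext y
  simp [mul_assoc]

theorem opNorm_flip_mul_apply_le (x : 𝔸) : ‖(mul 𝕂 𝔸).flip x‖ ≤ ‖x‖ :=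
  opNorm_le_bound _ (norm_nonneg x) fun y => by simpa [mul_comm ‖x‖] using norm_mul_le y x

theorem sum_pow_smul_id_smul_pow_eq_geom_sum₂ (x : 𝔸) (n : ℕ) :
    (∑ i ∈ range n, x ^ (n.pred - i) •> ContinuousLinearMap.id 𝕂 𝔸 <• x ^ i) =
      ∑ i ∈ range n, mul 𝕂 𝔸 x ^ i * (mul 𝕂 𝔸).flip x ^ (n - 1 - i) := by
  rw [(commute_mul_flip_mul x).geom_sum₂_comm]
  ext y
  simp [mul_assoc]

end ContinuousLinearMap

variable [CompleteSpace 𝔸]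

theorem NormedSpace.exp_mul_apply (x : 𝔸) : exp (mul 𝕂 𝔸 x) = mul 𝕂 𝔸 (exp x) := by
  rw [exp_eq_tsum 𝕂, exp_eq_tsum 𝕂, (mul 𝕂 𝔸).map_tsum (expSeries_summable' x)]
  congr! with n
  ext y
  simp

theorem hasFDerivAt_exp_eq_tsum_geom_sum₂ (x : 𝔸) :
    HasFDerivAt exp (∑' k : ℕ, (k ! : 𝕂)⁻¹ •
      ∑ i ∈ range k, mul 𝕂 𝔸 x ^ i * (mul 𝕂 𝔸).flip x ^ (k - 1 - i)) x := by
  set r := ‖x‖ + 1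
  have hr : 1 ≤ r := by simp [r]
  have hasFDerivAt_term (k : ℕ) (y : 𝔸) : HasFDerivAt (fun y : 𝔸 => (k ! : 𝕂)⁻¹ • y ^ k)
      ((k ! : 𝕂)⁻¹ • ∑ i ∈ range k, mul 𝕂 𝔸 y ^ i * (mul 𝕂 𝔸).flip y ^ (k - 1 - i)) y := by
    rw [← sum_pow_smul_id_smul_pow_eq_geom_sum₂]
    exact (hasFDerivAt_pow' (𝕜 := 𝕂) (x := y) k).const_smul (k ! : 𝕂)⁻¹
  have norm_term_le (k : ℕ) (y : 𝔸) (hyr : y ∈ Metric.ball 0 r) :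
      ‖(k ! : 𝕂)⁻¹ • ∑ i ∈ range k, mul 𝕂 𝔸 y ^ i * (mul 𝕂 𝔸).flip y ^ (k - 1 - i)‖ ≤
        (2 * r) ^ k / k ! := by
    have hy : ‖y‖ ≤ r := (mem_ball_zero_iff.mp hyr).le
    rw [norm_smul, norm_inv, RCLike.norm_natCast, div_eq_inv_mul, mul_pow]
    gcongr
    calc _ ≤ k * r ^ (k - 1) :=
          norm_geom_sum₂_le ((opNorm_mul_apply_le 𝕂 𝔸 y).trans hy)
            ((opNorm_flip_mul_apply_le y).trans hy) k
      _ ≤ 2 ^ k * r ^ k := by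
          gcongr
          · exact_mod_cast k.lt_two_pow_self.le
          · exact k.sub_le 1
  -- a real structure, only to see that balls are preconnected
  let := NormedSpace.restrictScalars ℝ 𝕂 𝔸
  rw [exp_eq_tsum 𝕂]
  exact hasFDerivAt_tsum_of_isPreconnected (Real.summable_pow_div_factorial (2 * r))
    Metric.isOpen_ball (convex_ball 0 r).isPreconnected (fun k y _ => hasFDerivAt_term k y)
    norm_term_le (Metric.mem_ball_self (by positivity)) (expSeries_summable' 0) (by simp [r])

theorem hasFDerivAt_exp_eq_exp_mul_tsum (x : 𝔸) :
    HasFDerivAt exp (mul 𝕂 𝔸 (exp x) *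
      ∑' q : ℕ, ((q + 1)! : 𝕂)⁻¹ • ((mul 𝕂 𝔸).flip x - mul 𝕂 𝔸 x) ^ q) x := by
  rw [← exp_mul_apply, ← (commute_mul_flip_mul x).tsum_inv_factorial_smul_geom_sum₂_eq_exp_mul]
  exact hasFDerivAt_exp_eq_tsum_geom_sum₂ x

end Derivative

theorem deriv_exp_left_trivialized {n : ℕ} (Z : ℝ → Matrix (Fin n) (Fin n) ℝ)
    (hZ : Differentiable ℝ Z) (t : ℝ) :
    deriv (fun s => NormedSpace.exp (Z s)) t =
      NormedSpace.exp (Z t) * dexp (-(Z t)) (deriv Z t) := by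
  set T := (mul ℝ _).flip (Z t) - mul ℝ _ (Z t)
  have hT : ⇑T = adM (-(Z t)) := by
    funext B
    simp only [T, _root_.sub_apply, flip_apply, ContinuousLinearMap.mul_apply', adM, neg_mul,
      mul_neg, sub_neg_eq_add]
    abel
  refine ((hasFDerivAt_exp_eq_exp_mul_tsum (Z t)).comp_hasDerivAt t (hZ t).hasDerivAt).deriv.trans ?_
  rw [mul_apply_eq_comp, ContinuousLinearMap.mul_apply', dexp]
  congr 1
  refine ((apply ℝ _ (deriv Z t)).map_tsum
    (summable_norm_inv_factorial_succ_smul_pow T).of_norm).trans ?_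
  refine tsum_congr fun q => ?_
  rw [apply_apply, _root_.smul_apply, FunLike.coe_pow_eq_iterate, hT]
end
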